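/- arXiv:1705.01069 — 3 statements merged into one kernel-verified Lean document; each statement's English description precedes it below -/
import Mathlib

section
/- With the notation of the fractional linear example: for all x ∈ ℝ, the denominator D(x) := G(x) − G(x+z₀) + (e^{z₀}−1) G'(x) + z₀² has a strictly positive lower bound. In particular: for x < γ₁, D(x) = (e^{z₀}−1−z₀)(α+2βγ₁) + z₀² > βz₀² > 0; for x > γ₂ − z₀, D(x) = (e^{z₀}−1−z₀) G'(γ₂) + z₀² > βz₀²; for x ∈ (γ₁, γ₂), D(x) ≥ (1−β)z₀² + (α+2βγ₁)(e^{z₀}−1−z₀) > 0; and for x ∈ (γ₂, γ₂ − z₀), D(x) ≥ (e^{z₀}−1−z₀)G'(γ₂) + (1−β)z₀² > 0. -/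
/-!
`G` is `C¹` with `G' x = α + 2β·max γ₁ (min γ₂ x)`, and `G' - 2β·id` is antitone, i.e.
`G - βx²` is concave. So `G` lies below its tangent line plus `β (y - x)²`; taking
`y = x + z₀` gives `D x ≥ E·G' x + (1 - β) z₀²` with `E = e^{z₀} - 1 - z₀ > 0`. The point
`γ₀` is exactly where `E (α + 2βγ) + (1 - β) z₀²` vanishes, so `G' ≥ α + 2βγ₁` with
`γ₁ > γ₀` makes the bound positive. On the two affine pieces of `G`, `D` is computed exactly.
-/

open Asymptotics Set

lemma abs_max_zero_sq_sub_sub_le (y t : ℝ) :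
    |max t 0 ^ 2 - max y 0 ^ 2 - (t - y) * (2 * max y 0)| ≤ (t - y) ^ 2 := by
  rw [abs_le]
  rcases le_total t 0 with ht | ht <;> rcases le_total y 0 with hy | hy <;>
    simp only [max_eq_left, max_eq_right, ht, hy] <;> constructor <;> nlinarith

lemma hasDerivAt_max_zero_sq (y : ℝ) : HasDerivAt (fun t => max t 0 ^ 2) (2 * max y 0) y := by
  refine .of_isLittleO <| IsBigO.trans_isLittleO ?_ (isLittleO_pow_sub_sub y one_lt_two)
  refine .of_bound 1 (.of_forall fun t => ?_)
  simpa using abs_max_zero_sq_sub_sub_le y t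

lemma le_add_mul_sub_add_sq_of_antitone {f f' : ℝ → ℝ} {L : ℝ}
    (hf : ∀ x, HasDerivAt f (f' x) x) (hanti : Antitone fun x => f' x - L * x) (x y : ℝ) :
    f y ≤ f x + f' x * (y - x) + L / 2 * (y - x) ^ 2 := by
  -- `ψ' t = (f' t - L t) - (f' x - L x)` changes sign from `+` to `-` at `x`, so `ψ` peaks there.
  set ψ : ℝ → ℝ := fun t => f t - f' x * (t - x) - L / 2 * (t - x) ^ 2
  have hψ : ∀ t, HasDerivAt ψ (f' t - L * t - (f' x - L * x)) t := fun t => by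
    have hsub := (hasDerivAt_id' t).sub_const x
    exact ((hf t).sub (hsub.const_mul (f' x))).sub ((hsub.pow 2).const_mul (L / 2))
      |>.congr_deriv (by ring)
  have hcont : Continuous ψ := continuous_iff_continuousAt.2 fun t => (hψ t).continuousAt
  suffices ψ y ≤ ψ x by simp only [ψ] at this; linarith
  rcases le_total y x with hyx | hxy
  · refine monotoneOn_of_hasDerivWithinAt_nonneg (convex_Iic x) hcont.continuousOn
      (fun t _ => (hψ t).hasDerivWithinAt) (fun t ht => ?_) hyx (mem_Iic.2 le_rfl) hyx
    rw [interior_Iic] at ht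
    exact sub_nonneg.2 (hanti (le_of_lt ht))
  · refine antitoneOn_of_hasDerivWithinAt_nonpos (convex_Ici x) hcont.continuousOn
      (fun t _ => (hψ t).hasDerivWithinAt) (fun t ht => ?_) (mem_Ici.2 le_rfl) hxy hxy
    rw [interior_Ici] at ht
    exact sub_nonpos.2 (hanti (le_of_lt ht))

lemma antitone_max_min_sub_self (a b : ℝ) : Antitone fun x => max a (min b x) - x := by
  intro x y hxy
  simp only [← max_sub_sub_right, ← min_sub_sub_right, sub_self]
  gcongr

noncomputable def quadLinSpline (α β γ₁ γ₂ x : ℝ) : ℝ :=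
  if x < γ₁ then α * γ₁ + β * γ₁ ^ 2 + (x - γ₁) * (α + 2 * β * γ₁)
  else if x ≤ γ₂ then α * x + β * x ^ 2
  else α * γ₂ + β * γ₂ ^ 2 + (x - γ₂) * (α + 2 * β * γ₂)

section quadLinSpline

variable {α β γ₁ γ₂ : ℝ}

lemma quadLinSpline_eq_sub_max_zero_sq (h : γ₁ ≤ γ₂) (x : ℝ) :
    quadLinSpline α β γ₁ γ₂ x =
      α * x + β * x ^ 2 - β * max (γ₁ - x) 0 ^ 2 - β * max (x - γ₂) 0 ^ 2 := by
  unfold quadLinSpline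
  split_ifs with h₁ h₂
  · rw [max_eq_left (by linarith), max_eq_right (by linarith)]; ring
  · rw [max_eq_right (by linarith), max_eq_right (by linarith)]; ring
  · rw [max_eq_right (by linarith), max_eq_left (by linarith)]; ring

lemma hasDerivAt_quadLinSpline (h : γ₁ ≤ γ₂) (x : ℝ) :
    HasDerivAt (quadLinSpline α β γ₁ γ₂) (α + 2 * β * max γ₁ (min γ₂ x)) x := by
  have hleft := (hasDerivAt_max_zero_sq (γ₁ - x)).comp x ((hasDerivAt_id' x).const_sub γ₁)
  have hright := (hasDerivAt_max_zero_sq (x - γ₂)).comp x ((hasDerivAt_id' x).sub_const γ₂)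
  have hquad := ((hasDerivAt_id' x).const_mul α).add (((hasDerivAt_id' x).pow 2).const_mul β)
  have hclamp : max γ₁ (min γ₂ x) = x + max (γ₁ - x) 0 - max (x - γ₂) 0 := by
    simp only [max_def, min_def]
    split_ifs <;> linarith
  rw [funext (quadLinSpline_eq_sub_max_zero_sq h), hclamp]
  exact ((hquad.sub (hleft.const_mul β)).sub (hright.const_mul β)).congr_deriv (by ring)

lemma quadLinSpline_le_add_mul_sub_add_sq (hβ : 0 ≤ β) (h : γ₁ ≤ γ₂) (x y : ℝ) :
    quadLinSpline α β γ₁ γ₂ y ≤ quadLinSpline α β γ₁ γ₂ x +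
      (α + 2 * β * max γ₁ (min γ₂ x)) * (y - x) + β * (y - x) ^ 2 := by
  have hanti : Antitone fun x => α + 2 * β * max γ₁ (min γ₂ x) - 2 * β * x :=
    fun x y hxy => by nlinarith [antitone_max_min_sub_self γ₁ γ₂ hxy]
  have := le_add_mul_sub_add_sq_of_antitone (hasDerivAt_quadLinSpline h) hanti x y
  linarith

lemma deriv_quadLinSpline (h : γ₁ ≤ γ₂) (x : ℝ) :
    deriv (quadLinSpline α β γ₁ γ₂) x = α + 2 * β * max γ₁ (min γ₂ x) :=
  (hasDerivAt_quadLinSpline h x).deriv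

lemma le_deriv_quadLinSpline (hβ : 0 ≤ β) (h : γ₁ ≤ γ₂) (x : ℝ) :
    α + 2 * β * γ₁ ≤ deriv (quadLinSpline α β γ₁ γ₂) x := by
  rw [deriv_quadLinSpline h]
  gcongr
  exact le_max_left _ _

lemma deriv_quadLinSpline_of_le (h : γ₁ ≤ γ₂) {x : ℝ} (hx : x ≤ γ₁) :
    deriv (quadLinSpline α β γ₁ γ₂) x = α + 2 * β * γ₁ := by
  rw [deriv_quadLinSpline h, max_eq_left ((min_le_right _ _).trans hx)]

lemma deriv_quadLinSpline_of_ge (h : γ₁ ≤ γ₂) {x : ℝ} (hx : γ₂ ≤ x) :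
    deriv (quadLinSpline α β γ₁ γ₂) x = α + 2 * β * γ₂ := by
  rw [deriv_quadLinSpline h, min_eq_left hx, max_eq_right h]

lemma mul_deriv_add_le_quadLinSpline_sub (hβ : 0 ≤ β) (h : γ₁ ≤ γ₂) (x z : ℝ) :
    (Real.exp z - 1 - z) * deriv (quadLinSpline α β γ₁ γ₂) x + (1 - β) * z ^ 2 ≤
      quadLinSpline α β γ₁ γ₂ x - quadLinSpline α β γ₁ γ₂ (x + z) +
        (Real.exp z - 1) * deriv (quadLinSpline α β γ₁ γ₂) x + z ^ 2 := by
  have := quadLinSpline_le_add_mul_sub_add_sq (α := α) hβ h x (x + z)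
  rw [deriv_quadLinSpline h]
  linarith

lemma quadLinSpline_sub_of_lt {x y : ℝ} (hx : x < γ₁) (hy : y < γ₁) :
    quadLinSpline α β γ₁ γ₂ x - quadLinSpline α β γ₁ γ₂ y =
      (α + 2 * β * γ₁) * (x - y) := by
  simp only [quadLinSpline, if_pos hx, if_pos hy]; ring

lemma quadLinSpline_sub_of_gt (h : γ₁ ≤ γ₂) {x y : ℝ} (hx : γ₂ < x) (hy : γ₂ < y) :
    quadLinSpline α β γ₁ γ₂ x - quadLinSpline α β γ₁ γ₂ y =
      (α + 2 * β * γ₂) * (x - y) := by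
  simp only [quadLinSpline, if_neg (not_lt.2 (h.trans hx.le)),
    if_neg (not_lt.2 (h.trans hy.le)), if_neg (not_le.2 hx), if_neg (not_le.2 hy)]
  ring

end quadLinSpline

lemma sub_one_mul_sq_lt_mul_slope {α β γ₀ γ c z : ℝ} (hβ : 0 < β) (hc : 0 < c)
    (hγ₀ : γ₀ = -α / (2 * β) + z ^ 2 * (1 - 1 / β) / (2 * c)) (hγ : γ₀ < γ) :
    (β - 1) * z ^ 2 < c * (α + 2 * β * γ) := by
  have hγ₀_slope : c * (α + 2 * β * γ₀) = (β - 1) * z ^ 2 := by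
    rw [hγ₀]
    field_simp
    ring
  nlinarith [mul_pos hc hβ]

theorem fractional_linear_denominator_lower_bound_general (z₀ α β γ₀ γ₁ γ₂ : ℝ)
    (hz₀ : z₀ < 0)
    (hβ0 : 0 < β)
    (hγ₀ : γ₀ = -α / (2 * β) + z₀ ^ 2 * (1 - 1 / β) / (2 * (Real.exp z₀ - z₀ - 1)))
    (h01 : γ₀ < γ₁) (h12 : γ₁ < γ₂)
    (G : ℝ → ℝ)
    (hG : ∀ x, G x =
      if x < γ₁ then α * γ₁ + β * γ₁ ^ 2 + (x - γ₁) * (α + 2 * β * γ₁)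
      else if x ≤ γ₂ then α * x + β * x ^ 2
      else α * γ₂ + β * γ₂ ^ 2 + (x - γ₂) * (α + 2 * β * γ₂))
    (D : ℝ → ℝ)
    (hD : ∀ x, D x = G x - G (x + z₀) + (Real.exp z₀ - 1) * deriv G x + z₀ ^ 2) :
    (∃ ε : ℝ, 0 < ε ∧ ∀ x : ℝ, ε ≤ D x) ∧
      (∀ x < γ₁, D x = (Real.exp z₀ - 1 - z₀) * (α + 2 * β * γ₁) + z₀ ^ 2 ∧ β * z₀ ^ 2 < D x) ∧
      (∀ x > γ₂ - z₀, D x = (Real.exp z₀ - 1 - z₀) * deriv G γ₂ + z₀ ^ 2 ∧ β * z₀ ^ 2 < D x) ∧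
      (∀ x ∈ Set.Ioo γ₁ γ₂,
        (1 - β) * z₀ ^ 2 + (α + 2 * β * γ₁) * (Real.exp z₀ - 1 - z₀) ≤ D x ∧
          0 < (1 - β) * z₀ ^ 2 + (α + 2 * β * γ₁) * (Real.exp z₀ - 1 - z₀)) ∧
      (∀ x ∈ Set.Ioo γ₂ (γ₂ - z₀),
        (Real.exp z₀ - 1 - z₀) * deriv G γ₂ + (1 - β) * z₀ ^ 2 ≤ D x ∧
          0 < (Real.exp z₀ - 1 - z₀) * deriv G γ₂ + (1 - β) * z₀ ^ 2) := by
  obtain rfl : G = quadLinSpline α β γ₁ γ₂ := funext hG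
  set E := Real.exp z₀ - 1 - z₀
  have hE : 0 < E := by linarith [Real.add_one_lt_exp hz₀.ne]
  have hslope₁ : (β - 1) * z₀ ^ 2 < E * (α + 2 * β * γ₁) := by
    refine sub_one_mul_sq_lt_mul_slope hβ0 hE ?_ h01
    rw [hγ₀, show Real.exp z₀ - z₀ - 1 = E by ring]
  have hslope₂ : (β - 1) * z₀ ^ 2 < E * (α + 2 * β * γ₂) :=
    hslope₁.trans_le (by gcongr)
  have hlower (x : ℝ) : (1 - β) * z₀ ^ 2 + (α + 2 * β * γ₁) * E ≤ D x := by
    rw [hD]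
    linarith [mul_deriv_add_le_quadLinSpline_sub (α := α) hβ0.le h12.le x z₀,
      mul_le_mul_of_nonneg_left (le_deriv_quadLinSpline (α := α) hβ0.le h12.le x) hE.le]
  have hlower_pos : 0 < (1 - β) * z₀ ^ 2 + (α + 2 * β * γ₁) * E := by linarith
  rw [deriv_quadLinSpline_of_ge h12.le le_rfl]
  refine ⟨⟨_, hlower_pos, hlower⟩, fun x hx => ?_, fun x hx => ?_,
    fun x _ => ⟨hlower x, hlower_pos⟩, fun x hx => ⟨?_, by linarith⟩⟩
  · have hD_eq : D x = E * (α + 2 * β * γ₁) + z₀ ^ 2 := by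
      rw [hD, deriv_quadLinSpline_of_le h12.le hx.le, quadLinSpline_sub_of_lt hx (by linarith)]
      ring
    exact ⟨hD_eq, by linarith⟩
  · have hD_eq : D x = E * (α + 2 * β * γ₂) + z₀ ^ 2 := by
      rw [hD, deriv_quadLinSpline_of_ge h12.le (by linarith),
        quadLinSpline_sub_of_gt h12.le (by linarith) (by linarith)]
      ring
    exact ⟨hD_eq, by linarith⟩
  · simpa only [hD, deriv_quadLinSpline_of_ge h12.le hx.1.le] using
      mul_deriv_add_le_quadLinSpline_sub (α := α) hβ0.le h12.le x z₀

theorem fractional_linear_denominator_lower_bound (z₀ α β γ₀ γ₁ γ₂ γ₃ : ℝ)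
    (hz₀ : z₀ < 0)
    (hβ0 : 0 < β) (hβ1 : β < 1 - 2 * (Real.exp z₀ - z₀ - 1) / z₀ ^ 2)
    (hγ₃ : γ₃ = -α / (2 * β) - 1 / β)
    (hγ₀ : γ₀ = -α / (2 * β) + z₀ ^ 2 * (1 - 1 / β) / (2 * (Real.exp z₀ - z₀ - 1)))
    (h01 : γ₀ < γ₁) (h12 : γ₁ < γ₂) (h23 : γ₂ < γ₃)
    (G : ℝ → ℝ)
    (hG : ∀ x, G x =
      if x < γ₁ then α * γ₁ + β * γ₁ ^ 2 + (x - γ₁) * (α + 2 * β * γ₁)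
      else if x ≤ γ₂ then α * x + β * x ^ 2
      else α * γ₂ + β * γ₂ ^ 2 + (x - γ₂) * (α + 2 * β * γ₂))
    (D : ℝ → ℝ)
    (hD : ∀ x, D x = G x - G (x + z₀) + (Real.exp z₀ - 1) * deriv G x + z₀ ^ 2) :
    (∃ ε : ℝ, 0 < ε ∧ ∀ x : ℝ, ε ≤ D x) ∧
      (∀ x < γ₁, D x = (Real.exp z₀ - 1 - z₀) * (α + 2 * β * γ₁) + z₀ ^ 2 ∧ β * z₀ ^ 2 < D x) ∧
      (∀ x > γ₂ - z₀, D x = (Real.exp z₀ - 1 - z₀) * deriv G γ₂ + z₀ ^ 2 ∧ β * z₀ ^ 2 < D x) ∧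
      (∀ x ∈ Set.Ioo γ₁ γ₂,
        (1 - β) * z₀ ^ 2 + (α + 2 * β * γ₁) * (Real.exp z₀ - 1 - z₀) ≤ D x ∧
          0 < (1 - β) * z₀ ^ 2 + (α + 2 * β * γ₁) * (Real.exp z₀ - 1 - z₀)) ∧
      (∀ x ∈ Set.Ioo γ₂ (γ₂ - z₀),
        (Real.exp z₀ - 1 - z₀) * deriv G γ₂ + (1 - β) * z₀ ^ 2 ≤ D x ∧
          0 < (Real.exp z₀ - 1 - z₀) * deriv G γ₂ + (1 - β) * z₀ ^ 2) :=
  fractional_linear_denominator_lower_bound_general z₀ α β γ₀ γ₁ γ₂ hz₀ hβ0 hγ₀ h01 h12 G hG D hD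
end

section
/- With G and c defined as in the fractional linear example—c(x) = (a²(x)/2) · (G''(x) − G'(x) − 2) / (G(x) − G(x+z₀) + (e^{z₀}−1)G'(x) + z₀²) for a positive bounded Borel function a—the function c is positive and bounded. -/
/-!
The function `G` is `αx + βx²` on `[γ₁, γ₂]`, continued affinely (and `C¹`) outside, so
`G' = α + 2β · clamp(x, γ₁, γ₂)` lies in `[α + 2βγ₁, α + 2βγ₂]` and `βx² - G` is convex.
The choice of `γ₃` turns `α = -2βγ₃ - 2`, so the numerator `G'' - G' - 2` is pinned between
`2β(γ₃ - γ₂) > 0` and `2β(1 + γ₃ - γ₁)`. In the denominator, convexity of `βx² - G` bounds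
`G(x) - G(x + z₀) + z₀G'(x)` below by `-βz₀²`, and with `E = e^{z₀} - z₀ - 1 > 0` what remains is
at least `E(α + 2βγ₁) + (1 - β)z₀²`, which the choice of `γ₀` makes equal to `2βE(γ₁ - γ₀) > 0`.
-/

open Filter Topology

lemma sq_max_zero_add_mul_le (u v : ℝ) :
    max u 0 ^ 2 + 2 * max u 0 * (v - u) ≤ max v 0 ^ 2 := by
  rcases le_total u 0 with hu | hu
  · simp [max_eq_right hu]
  · rw [max_eq_left hu]
    nlinarith [sq_nonneg (max v 0 - u), le_max_left v 0, le_max_right v 0]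

lemma hasDerivAt_sq_max_zero (x : ℝ) : HasDerivAt (fun y : ℝ => max y 0 ^ 2) (2 * max x 0) x := by
  refine hasDerivAt_of_hasDerivAt_of_ne' (g := fun y => 2 * max y 0) (x := 0) (fun y hy => ?_)
    (by fun_prop) (by fun_prop) x
  rcases hy.lt_or_gt with hy | hy
  · have hloc : (fun y : ℝ => max y 0 ^ 2) =ᶠ[𝓝 y] fun _ => 0 := by
      filter_upwards [Iio_mem_nhds hy] with t (ht : t < 0)
      simp [max_eq_right ht.le]
    simpa [max_eq_right hy.le] using (hasDerivAt_const y (0 : ℝ)).congr_of_eventuallyEq hloc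
  · have hloc : (fun y : ℝ => max y 0 ^ 2) =ᶠ[𝓝 y] fun t => t ^ 2 := by
      filter_upwards [Ioi_mem_nhds hy] with t (ht : 0 < t)
      simp [max_eq_left ht.le]
    simpa [max_eq_left hy.le] using (hasDerivAt_pow 2 y).congr_of_eventuallyEq hloc

lemma sq_div_two_mul_div_pos_and_le {a M n N d δ : ℝ} (ha : 0 < a) (haM : a ≤ M)
    (hn : 0 < n) (hnN : n ≤ N) (hδ : 0 < δ) (hδd : δ ≤ d) :
    0 < a ^ 2 / 2 * n / d ∧ a ^ 2 / 2 * n / d ≤ M ^ 2 / 2 * N / δ := by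
  have hN : 0 < N := hn.trans_le hnN
  refine ⟨by have := hδ.trans_le hδd; positivity, ?_⟩
  have ha_sq : a ^ 2 / 2 ≤ M ^ 2 / 2 := by gcongr
  exact div_le_div₀ (by positivity) (mul_le_mul ha_sq hnN hn.le (by positivity)) hδ hδd

section QuadAffineExt

variable {α β γ₁ γ₂ : ℝ}

variable (α β γ₁ γ₂) in
/-- `αx + βx²` on `[γ₁, γ₂]`, continued by its tangent lines at `γ₁` and `γ₂`. -/
noncomputable def quadAffineExt (x : ℝ) : ℝ :=
  α * x + β * x ^ 2 - β * max (γ₁ - x) 0 ^ 2 - β * max (x - γ₂) 0 ^ 2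

variable (α β γ₁ γ₂) in
noncomputable def quadAffineExtDeriv (x : ℝ) : ℝ :=
  α + 2 * β * max γ₁ (min x γ₂)

lemma ite_eq_quadAffineExt (h : γ₁ ≤ γ₂) (x : ℝ) :
    (if x < γ₁ then α * γ₁ + β * γ₁ ^ 2 + (x - γ₁) * (α + 2 * β * γ₁)
      else if x ≤ γ₂ then α * x + β * x ^ 2
      else α * γ₂ + β * γ₂ ^ 2 + (x - γ₂) * (α + 2 * β * γ₂)) = quadAffineExt α β γ₁ γ₂ x := by
  unfold quadAffineExt
  split_ifs with h₁ h₂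
  · rw [max_eq_left (by linarith), max_eq_right (by linarith)]; ring
  · rw [max_eq_right (by linarith), max_eq_right (by linarith)]; ring
  · rw [max_eq_right (by linarith), max_eq_left (by linarith)]; ring

lemma quadAffineExtDeriv_eq (h : γ₁ ≤ γ₂) (x : ℝ) :
    quadAffineExtDeriv α β γ₁ γ₂ x =
      α + 2 * β * x + 2 * β * max (γ₁ - x) 0 - 2 * β * max (x - γ₂) 0 := by
  unfold quadAffineExtDeriv
  rcases le_or_gt x γ₁ with h₁ | h₁
  · rw [min_eq_left (h₁.trans h), max_eq_left h₁, max_eq_left (by linarith),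
      max_eq_right (by linarith)]
    ring
  rcases le_or_gt x γ₂ with h₂ | h₂
  · rw [min_eq_left h₂, max_eq_right h₁.le, max_eq_right (by linarith), max_eq_right (by linarith)]
    ring
  · rw [min_eq_right h₂.le, max_eq_right h, max_eq_right (by linarith), max_eq_left (by linarith)]
    ring

lemma hasDerivAt_quadAffineExt (h : γ₁ ≤ γ₂) (x : ℝ) :
    HasDerivAt (quadAffineExt α β γ₁ γ₂) (quadAffineExtDeriv α β γ₁ γ₂ x) x := by
  have hlow := (hasDerivAt_sq_max_zero (γ₁ - x)).comp_const_sub γ₁ x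
  have hhigh := (hasDerivAt_sq_max_zero (x - γ₂)).comp_sub_const x γ₂
  have hquad := ((hasDerivAt_id x).const_mul α).add ((hasDerivAt_pow 2 x).const_mul β)
  refine ((hquad.sub (hlow.const_mul β)).sub (hhigh.const_mul β)).congr_deriv ?_
  rw [quadAffineExtDeriv_eq h]
  simp only [Nat.cast_ofNat]
  ring

lemma quadAffineExtDeriv_mem_Icc (hβ : 0 ≤ β) (h : γ₁ ≤ γ₂) (x : ℝ) :
    quadAffineExtDeriv α β γ₁ γ₂ x ∈ Set.Icc (α + 2 * β * γ₁) (α + 2 * β * γ₂) := by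
  have hlow : γ₁ ≤ max γ₁ (min x γ₂) := le_max_left _ _
  have hhigh : max γ₁ (min x γ₂) ≤ γ₂ := max_le h (min_le_right _ _)
  unfold quadAffineExtDeriv
  constructor <;> nlinarith

lemma quadAffineExt_le_tangent_add_sq (hβ : 0 ≤ β) (h : γ₁ ≤ γ₂) (x y : ℝ) :
    quadAffineExt α β γ₁ γ₂ y ≤
      quadAffineExt α β γ₁ γ₂ x + (y - x) * quadAffineExtDeriv α β γ₁ γ₂ x + β * (y - x) ^ 2 := by
  have hlow := mul_le_mul_of_nonneg_left (sq_max_zero_add_mul_le (γ₁ - x) (γ₁ - y)) hβ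
  have hhigh := mul_le_mul_of_nonneg_left (sq_max_zero_add_mul_le (x - γ₂) (y - γ₂)) hβ
  rw [quadAffineExtDeriv_eq h]
  unfold quadAffineExt
  nlinarith

lemma le_quadAffineExt_sub_add_mul_deriv (hβ : 0 ≤ β) (h : γ₁ ≤ γ₂) (x z : ℝ) :
    (Real.exp z - z - 1) * (α + 2 * β * γ₁) + (1 - β) * z ^ 2 ≤
      quadAffineExt α β γ₁ γ₂ x - quadAffineExt α β γ₁ γ₂ (x + z)
        + (Real.exp z - 1) * quadAffineExtDeriv α β γ₁ γ₂ x + z ^ 2 := by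
  have hE : 0 ≤ Real.exp z - z - 1 := by linarith [Real.add_one_le_exp z]
  have htaylor := quadAffineExt_le_tangent_add_sq (α := α) hβ h x (x + z)
  have hderiv := mul_le_mul_of_nonneg_left (quadAffineExtDeriv_mem_Icc (α := α) hβ h x).1 hE
  rw [add_sub_cancel_left] at htaylor
  linarith

end QuadAffineExt

theorem fractional_linear_c_positive_bounded_general (z₀ α β γ₀ γ₁ γ₂ γ₃ : ℝ)
    (hz₀ : z₀ < 0)
    (hβ0 : 0 < β)
    (hγ₃ : γ₃ = -α / (2 * β) - 1 / β)
    (hγ₀ : γ₀ = -α / (2 * β) + z₀ ^ 2 * (1 - 1 / β) / (2 * (Real.exp z₀ - z₀ - 1)))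
    (h01 : γ₀ < γ₁) (h12 : γ₁ < γ₂) (h23 : γ₂ < γ₃)
    (G : ℝ → ℝ)
    (hG : ∀ x, G x =
      if x < γ₁ then α * γ₁ + β * γ₁ ^ 2 + (x - γ₁) * (α + 2 * β * γ₁)
      else if x ≤ γ₂ then α * x + β * x ^ 2
      else α * γ₂ + β * γ₂ ^ 2 + (x - γ₂) * (α + 2 * β * γ₂))
    (G'' : ℝ → ℝ)
    (hG'' : ∀ x, G'' x = Set.indicator (Set.Icc γ₁ γ₂) (fun _ => 2 * β) x)
    (a : ℝ → ℝ) (hapos : ∀ x, 0 < a x)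
    (habd : ∃ M : ℝ, ∀ x, a x ≤ M)
    (c : ℝ → ℝ)
    (hc : ∀ x, c x = (a x ^ 2 / 2) * (G'' x - deriv G x - 2)
        / (G x - G (x + z₀) + (Real.exp z₀ - 1) * deriv G x + z₀ ^ 2)) :
    (∀ x, 0 < c x) ∧ (∃ M : ℝ, ∀ x, c x ≤ M) := by
  obtain ⟨M, haM⟩ := habd
  set E := Real.exp z₀ - z₀ - 1
  have hE : 0 < E := by linarith [Real.add_one_lt_exp hz₀.ne]
  have hGeq : G = quadAffineExt α β γ₁ γ₂ :=
    funext fun x => (hG x).trans (ite_eq_quadAffineExt h12.le x)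
  have hG' (x : ℝ) : deriv G x = quadAffineExtDeriv α β γ₁ γ₂ x :=
    hGeq ▸ (hasDerivAt_quadAffineExt h12.le x).deriv
  have hα : α = -2 * β * γ₃ - 2 := by rw [hγ₃]; field_simp; ring
  have hnum (x : ℝ) : 2 * β * (γ₃ - γ₂) ≤ G'' x - deriv G x - 2 ∧
      G'' x - deriv G x - 2 ≤ 2 * β * (1 + γ₃ - γ₁) := by
    obtain ⟨hlow, hhigh⟩ := quadAffineExtDeriv_mem_Icc hβ0.le h12.le x
    have hG''x : 0 ≤ G'' x ∧ G'' x ≤ 2 * β := by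
      rw [hG'', Set.indicator_apply]; split_ifs <;> constructor <;> linarith
    rw [hG']; constructor <;> linarith
  have hden (x : ℝ) : 2 * β * E * (γ₁ - γ₀) ≤
      G x - G (x + z₀) + (Real.exp z₀ - 1) * deriv G x + z₀ ^ 2 := by
    have hγ₀' : E * (α + 2 * β * γ₁) + (1 - β) * z₀ ^ 2 = 2 * β * E * (γ₁ - γ₀) := by
      rw [hγ₀]; field_simp; ring
    rw [hG', hGeq, ← hγ₀']
    exact le_quadAffineExt_sub_add_mul_deriv hβ0.le h12.le x z₀
  have hnum_pos : 0 < 2 * β * (γ₃ - γ₂) := by have := sub_pos.2 h23; positivity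
  have hden_pos : 0 < 2 * β * E * (γ₁ - γ₀) := by have := sub_pos.2 h01; positivity
  have hc_bounds (x : ℝ) :=
    sq_div_two_mul_div_pos_and_le (hapos x) (haM x) (hnum_pos.trans_le (hnum x).1) (hnum x).2
      hden_pos (hden x)
  exact ⟨fun x => hc x ▸ (hc_bounds x).1, _, fun x => hc x ▸ (hc_bounds x).2⟩

theorem fractional_linear_c_positive_bounded (z₀ α β γ₀ γ₁ γ₂ γ₃ : ℝ)
    (hz₀ : z₀ < 0)
    (hβ0 : 0 < β) (hβ1 : β < 1 - 2 * (Real.exp z₀ - z₀ - 1) / z₀ ^ 2)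
    (hγ₃ : γ₃ = -α / (2 * β) - 1 / β)
    (hγ₀ : γ₀ = -α / (2 * β) + z₀ ^ 2 * (1 - 1 / β) / (2 * (Real.exp z₀ - z₀ - 1)))
    (h01 : γ₀ < γ₁) (h12 : γ₁ < γ₂) (h23 : γ₂ < γ₃)
    (G : ℝ → ℝ)
    (hG : ∀ x, G x =
      if x < γ₁ then α * γ₁ + β * γ₁ ^ 2 + (x - γ₁) * (α + 2 * β * γ₁)
      else if x ≤ γ₂ then α * x + β * x ^ 2
      else α * γ₂ + β * γ₂ ^ 2 + (x - γ₂) * (α + 2 * β * γ₂))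
    (G'' : ℝ → ℝ)
    (hG'' : ∀ x, G'' x = Set.indicator (Set.Icc γ₁ γ₂) (fun _ => 2 * β) x)
    (a : ℝ → ℝ) (ha : Measurable a) (hapos : ∀ x, 0 < a x)
    (habd : ∃ M : ℝ, ∀ x, a x ≤ M)
    (c : ℝ → ℝ)
    (hc : ∀ x, c x = (a x ^ 2 / 2) * (G'' x - deriv G x - 2)
        / (G x - G (x + z₀) + (Real.exp z₀ - 1) * deriv G x + z₀ ^ 2)) :
    (∀ x, 0 < c x) ∧ (∃ M : ℝ, ∀ x, c x ≤ M) :=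
  fractional_linear_c_positive_bounded_general z₀ α β γ₀ γ₁ γ₂ γ₃ hz₀ hβ0 hγ₃ hγ₀ h01 h12 h23 G hG
    G'' hG'' a hapos habd c hc
end

section
/- Define φ_λ = α(λ² − λ) + ∫(e^{λz} − 1 + (1−e^z)λ)ν₀(dz), χ_λ = β(λ² − λ) + ∫(e^{λz} − 1 + (1−e^z)λ)ν₁(dz), Q₀ = (2α + ∫z²ν₀)/(α + ∫(e^z−1−z)ν₀), Q₁ = 2β + ∫z²ν₁ − Q₀(β + ∫(e^z−1−z)ν₁). Let G₀(x) = −Q₀x and Gₙ(x) = Q₁ (e^{ncx}/φ_{nc}) ∏_{k=1}^{n−1}(−χ_{kc}/φ_{kc}) for n ≥ 1. Then: A₀G₀ = 2α + ∫z²ν₀; A₀G₁ + e^{cx}A₁G₀ = e^{cx}(2β + ∫z²ν₁); and A₀Gₙ + e^{cx}A₁G_{n−1} = 0 for n ≥ 2, where A₀, A₁ are the operators with coefficients (α, ν₀) and (β, ν₁) respectively and φ_{nc} ≠ 0 for all n ≥ 1. -/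
/-!
Exponentials are eigenfunctions of a Lévy-type generator, `A e^{a·} = φ(a) e^{a·}`, and linear
functions are mapped to constants. So `A₀ G₀ = Q₀ (α + ∫(e^z-1-z) dν₀)`, while for `n ≥ 1` the
division by `φ(nc)` makes `A₀ Gₙ` the numerator of `Gₙ` times `e^{ncx}`; the extra factor
`-χ((n-1)c)/φ((n-1)c)` in that numerator is exactly what cancels `e^{cx} A₁ G_{n-1}`, because
`e^{cx} e^{(n-1)cx} = e^{ncx}`.
-/

open MeasureTheory Finset

section

noncomputable def levyGenerator (γ : ℝ) (ν : Measure ℝ) (g : ℝ → ℝ) (x : ℝ) : ℝ :=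
  γ * (deriv (deriv g) x - deriv g x) + ∫ z, (g (x + z) - g x + (1 - Real.exp z) * deriv g x) ∂ν

noncomputable def levySymbol (γ : ℝ) (ν : Measure ℝ) (a : ℝ) : ℝ :=
  γ * (a ^ 2 - a) + ∫ z, (Real.exp (a * z) - 1 + (1 - Real.exp z) * a) ∂ν

variable (γ : ℝ) (ν : Measure ℝ)

theorem levyGenerator_const_mul_id (K x : ℝ) :
    levyGenerator γ ν (fun y => K * y) x = -K * (γ + ∫ z, (Real.exp z - 1 - z) ∂ν) := by
  have hderiv : deriv (fun y : ℝ => K * y) = fun _ => K := by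
    funext y; simp
  have hintegrand : (fun z => K * (x + z) - K * x + (1 - Real.exp z) * K)
      = fun z => -K * (Real.exp z - 1 - z) := by
    funext z; ring
  simp only [levyGenerator, hderiv, deriv_const', hintegrand, integral_const_mul]
  ring

theorem levyGenerator_const_mul_exp (K a x : ℝ) :
    levyGenerator γ ν (fun y => K * Real.exp (a * y)) x
      = K * Real.exp (a * x) * levySymbol γ ν a := by
  have hderiv (K : ℝ) :
      deriv (fun y => K * Real.exp (a * y)) = fun y => K * a * Real.exp (a * y) := by
    funext y
    have h : HasDerivAt (fun y => K * Real.exp (a * y)) (K * (Real.exp (a * y) * (a * 1))) y :=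
      ((hasDerivAt_id y).const_mul a).exp.const_mul K
    rw [h.deriv]
    ring
  have hintegrand : (fun z => K * Real.exp (a * (x + z)) - K * Real.exp (a * x)
        + (1 - Real.exp z) * (K * a * Real.exp (a * x)))
      = fun z => K * Real.exp (a * x) * (Real.exp (a * z) - 1 + (1 - Real.exp z) * a) := by
    funext z
    rw [mul_add, Real.exp_add]
    ring
  simp only [levyGenerator, levySymbol, hderiv, hintegrand, integral_const_mul]
  ring

theorem levyGenerator_div_levySymbol_mul_exp {a : ℝ} (ha : levySymbol γ ν a ≠ 0) (K x : ℝ) :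
    levyGenerator γ ν (fun y => K / levySymbol γ ν a * Real.exp (a * y)) x
      = K * Real.exp (a * x) := by
  rw [levyGenerator_const_mul_exp]
  field_simp

end

theorem levy_mixture_nested_equations_general (α β c : ℝ) (ν₀ ν₁ : Measure ℝ)
    (φ χ : ℝ → ℝ)
    (hφ : ∀ l : ℝ, φ l = α * (l ^ 2 - l)
        + ∫ z, (Real.exp (l * z) - 1 + (1 - Real.exp z) * l) ∂ν₀)
    (hχ : ∀ l : ℝ, χ l = β * (l ^ 2 - l)
        + ∫ z, (Real.exp (l * z) - 1 + (1 - Real.exp z) * l) ∂ν₁)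
    (hφne : ∀ n : ℕ, 1 ≤ n → φ (n * c) ≠ 0)
    (hden : α + ∫ z, (Real.exp z - 1 - z) ∂ν₀ ≠ 0)
    (Q₀ Q₁ : ℝ)
    (hQ₀ : Q₀ = (2 * α + ∫ z, z ^ 2 ∂ν₀) / (α + ∫ z, (Real.exp z - 1 - z) ∂ν₀))
    (hQ₁ : Q₁ = 2 * β + (∫ z, z ^ 2 ∂ν₁)
        - Q₀ * (β + ∫ z, (Real.exp z - 1 - z) ∂ν₁))
    (Gs : ℕ → ℝ → ℝ)
    (hG0 : ∀ x, Gs 0 x = -Q₀ * x)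
    (hGn : ∀ n : ℕ, 1 ≤ n → ∀ x, Gs n x =
      Q₁ * (Real.exp ((n : ℝ) * c * x) / φ ((n : ℝ) * c))
        * ∏ k ∈ Finset.Icc 1 (n - 1), (-χ ((k : ℝ) * c) / φ ((k : ℝ) * c)))
    (A₀ A₁ : (ℝ → ℝ) → ℝ → ℝ)
    (hA₀ : ∀ g x, A₀ g x = α * (deriv (deriv g) x - deriv g x)
        + ∫ z, (g (x + z) - g x + (1 - Real.exp z) * deriv g x) ∂ν₀)
    (hA₁ : ∀ g x, A₁ g x = β * (deriv (deriv g) x - deriv g x)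
        + ∫ z, (g (x + z) - g x + (1 - Real.exp z) * deriv g x) ∂ν₁) :
    (∀ x, A₀ (Gs 0) x = 2 * α + ∫ z, z ^ 2 ∂ν₀) ∧
    (∀ x, A₀ (Gs 1) x + Real.exp (c * x) * A₁ (Gs 0) x
        = Real.exp (c * x) * (2 * β + ∫ z, z ^ 2 ∂ν₁)) ∧
    (∀ n : ℕ, 2 ≤ n → ∀ x,
        A₀ (Gs n) x + Real.exp (c * x) * A₁ (Gs (n - 1)) x = 0) := by
  obtain rfl : φ = levySymbol α ν₀ := funext hφ
  obtain rfl : χ = levySymbol β ν₁ := funext hχ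
  obtain rfl : A₀ = levyGenerator α ν₀ := funext fun g => funext (hA₀ g)
  obtain rfl : A₁ = levyGenerator β ν₁ := funext fun g => funext (hA₁ g)
  set P : ℕ → ℝ := fun n =>
    ∏ k ∈ Icc 1 (n - 1), (-levySymbol β ν₁ (k * c) / levySymbol α ν₀ (k * c))
  have hGs0 : Gs 0 = fun y => -Q₀ * y := funext hG0
  have hGs (n : ℕ) (hn : 1 ≤ n) : Gs n = fun y =>
      Q₁ * P n / levySymbol α ν₀ (n * c) * Real.exp (n * c * y) := by
    funext y; rw [hGn n hn]; ring
  refine ⟨fun x => ?_, fun x => ?_, fun n hn x => ?_⟩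
  · rw [hGs0, levyGenerator_const_mul_id, neg_neg, hQ₀, div_mul_cancel₀ _ hden]
  · rw [hGs 1 le_rfl, hGs0, levyGenerator_div_levySymbol_mul_exp _ _ (hφne 1 le_rfl),
      levyGenerator_const_mul_id, hQ₁]
    simp only [P, Nat.sub_self, Icc_eq_empty_of_lt one_pos, prod_empty, Nat.cast_one, one_mul]
    ring
  · obtain ⟨m, rfl⟩ : ∃ m, n = m + 1 + 1 := ⟨n - 2, by omega⟩
    have hP : P (m + 1 + 1) = P (m + 1) * (-levySymbol β ν₁ ((m + 1 : ℕ) * c)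
        / levySymbol α ν₀ ((m + 1 : ℕ) * c)) :=
      prod_Icc_succ_top (by omega) _
    have hexp : Real.exp (c * x) * Real.exp ((m + 1 : ℕ) * c * x)
        = Real.exp ((m + 1 + 1 : ℕ) * c * x) := by
      rw [← Real.exp_add]; push_cast; ring_nf
    rw [hGs _ (by omega), Nat.add_sub_cancel, hGs _ (by omega),
      levyGenerator_div_levySymbol_mul_exp _ _ (hφne _ (by omega)), levyGenerator_const_mul_exp,
      hP, ← hexp]
    field_simp [hφne (m + 1) (by omega)]
    ring

theorem levy_mixture_nested_equations (α β c : ℝ) (ν₀ ν₁ : Measure ℝ)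
    (hint₀ : ∀ l : ℝ, Integrable (fun z => Real.exp (l * z) - 1 + (1 - Real.exp z) * l) ν₀)
    (hint₁ : ∀ l : ℝ, Integrable (fun z => Real.exp (l * z) - 1 + (1 - Real.exp z) * l) ν₁)
    (hz2₀ : Integrable (fun z => z ^ 2) ν₀) (hz2₁ : Integrable (fun z => z ^ 2) ν₁)
    (hexp₀ : Integrable (fun z => Real.exp z - 1 - z) ν₀)
    (hexp₁ : Integrable (fun z => Real.exp z - 1 - z) ν₁)
    (φ χ : ℝ → ℝ)
    (hφ : ∀ l : ℝ, φ l = α * (l ^ 2 - l)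
        + ∫ z, (Real.exp (l * z) - 1 + (1 - Real.exp z) * l) ∂ν₀)
    (hχ : ∀ l : ℝ, χ l = β * (l ^ 2 - l)
        + ∫ z, (Real.exp (l * z) - 1 + (1 - Real.exp z) * l) ∂ν₁)
    (hφne : ∀ n : ℕ, 1 ≤ n → φ (n * c) ≠ 0)
    (hden : α + ∫ z, (Real.exp z - 1 - z) ∂ν₀ ≠ 0)
    (Q₀ Q₁ : ℝ)
    (hQ₀ : Q₀ = (2 * α + ∫ z, z ^ 2 ∂ν₀) / (α + ∫ z, (Real.exp z - 1 - z) ∂ν₀))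
    (hQ₁ : Q₁ = 2 * β + (∫ z, z ^ 2 ∂ν₁)
        - Q₀ * (β + ∫ z, (Real.exp z - 1 - z) ∂ν₁))
    (Gs : ℕ → ℝ → ℝ)
    (hG0 : ∀ x, Gs 0 x = -Q₀ * x)
    (hGn : ∀ n : ℕ, 1 ≤ n → ∀ x, Gs n x =
      Q₁ * (Real.exp ((n : ℝ) * c * x) / φ ((n : ℝ) * c))
        * ∏ k ∈ Finset.Icc 1 (n - 1), (-χ ((k : ℝ) * c) / φ ((k : ℝ) * c)))
    (A₀ A₁ : (ℝ → ℝ) → ℝ → ℝ)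
    (hA₀ : ∀ g x, A₀ g x = α * (deriv (deriv g) x - deriv g x)
        + ∫ z, (g (x + z) - g x + (1 - Real.exp z) * deriv g x) ∂ν₀)
    (hA₁ : ∀ g x, A₁ g x = β * (deriv (deriv g) x - deriv g x)
        + ∫ z, (g (x + z) - g x + (1 - Real.exp z) * deriv g x) ∂ν₁) :
    (∀ x, A₀ (Gs 0) x = 2 * α + ∫ z, z ^ 2 ∂ν₀) ∧
    (∀ x, A₀ (Gs 1) x + Real.exp (c * x) * A₁ (Gs 0) x
        = Real.exp (c * x) * (2 * β + ∫ z, z ^ 2 ∂ν₁)) ∧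
    (∀ n : ℕ, 2 ≤ n → ∀ x,
        A₀ (Gs n) x + Real.exp (c * x) * A₁ (Gs (n - 1)) x = 0) :=
  levy_mixture_nested_equations_general α β c ν₀ ν₁ φ χ hφ hχ hφne hden Q₀ Q₁ hQ₀ hQ₁ Gs hG0 hGn A₀
    A₁ hA₀ hA₁
end
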